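/- Theorem P1c: Fix ρ₀ and m₀ with m₀' = 4πρ₀r², and let p₁, p₂, p₃ be three solutions of the TOV pressure equation. Then for any λ ∈ ℝ the function p(r) = [λ p₁(p₃-p₂) + (1-λ)p₂(p₃-p₁)]/[λ(p₃-p₂) + (1-λ)(p₃-p₁)] is also a solution of the TOV pressure equation on any interval where the denominator is nonzero. -/

import Mathlib

/-!
The TOV equation is a Riccati equation `p' = a + b p + c p²` in `p`, with coefficients depending
on `r`. The function `p` of the theorem is characterised by the constancy of the cross-ratio
`(p - p₁)(p₃ - p₂) / ((p - p₂)(p₃ - p₁)) = -(1 - λ) / λ`, and Riccati flows act by Möbius maps,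
which preserve cross-ratios.
Concretely, the quotient rule applied to the three Riccati equations gives the Riccati equation
for `p` as a rational-function identity.
-/

section Riccati

variable {𝕜 : Type*} [NontriviallyNormedField 𝕜]

def riccatiCombination (lam : 𝕜) (p₁ p₂ p₃ : 𝕜 → 𝕜) (r : 𝕜) : 𝕜 :=
  (lam * p₁ r * (p₃ r - p₂ r) + (1 - lam) * p₂ r * (p₃ r - p₁ r))
    / (lam * (p₃ r - p₂ r) + (1 - lam) * (p₃ r - p₁ r))

theorem HasDerivAt.riccatiCombination {p₁ p₂ p₃ : 𝕜 → 𝕜} {a b c r : 𝕜} (lam : 𝕜)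
    (h₁ : HasDerivAt p₁ (a + b * p₁ r + c * p₁ r ^ 2) r)
    (h₂ : HasDerivAt p₂ (a + b * p₂ r + c * p₂ r ^ 2) r)
    (h₃ : HasDerivAt p₃ (a + b * p₃ r + c * p₃ r ^ 2) r)
    (hden : lam * (p₃ r - p₂ r) + (1 - lam) * (p₃ r - p₁ r) ≠ 0) :
    HasDerivAt (riccatiCombination lam p₁ p₂ p₃)
      (a + b * riccatiCombination lam p₁ p₂ p₃ r + c * riccatiCombination lam p₁ p₂ p₃ r ^ 2) r := by
  have hnum : HasDerivAt (fun x => lam * p₁ x * (p₃ x - p₂ x) + (1 - lam) * p₂ x * (p₃ x - p₁ x))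
      _ r :=
    ((h₁.const_mul lam).mul (h₃.sub h₂)).add ((h₂.const_mul (1 - lam)).mul (h₃.sub h₁))
  have hdenom : HasDerivAt (fun x => lam * (p₃ x - p₂ x) + (1 - lam) * (p₃ x - p₁ x)) _ r :=
    ((h₃.sub h₂).const_mul lam).add ((h₃.sub h₁).const_mul (1 - lam))
  refine (hnum.div hdenom hden).congr_deriv ?_
  rw [_root_.riccatiCombination, Pi.sub_apply]
  field_simp
  ring

end Riccati

theorem tov_rhs_eq_quadratic (ρ m r D x : ℝ) :
    -((ρ + x) * (m + 4 * Real.pi * x * r ^ 3) / D)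
      = -(ρ * m / D) + -((m + 4 * Real.pi * ρ * r ^ 3) / D) * x
        + -(4 * Real.pi * r ^ 3 / D) * x ^ 2 := by
  ring

theorem TOV_theorem_P1c_general
    (R : ℝ) (ρ₀ m₀ p₁ p₂ p₃ p : ℝ → ℝ) (lam : ℝ)
    (hTOV₁ : ∀ r ∈ Set.Ioc (0:ℝ) R,
      HasDerivAt p₁ (-((ρ₀ r + p₁ r) * (m₀ r + 4 * Real.pi * p₁ r * r^3)
        / (r^2 * (1 - 2 * m₀ r / r)))) r)
    (hTOV₂ : ∀ r ∈ Set.Ioc (0:ℝ) R,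
      HasDerivAt p₂ (-((ρ₀ r + p₂ r) * (m₀ r + 4 * Real.pi * p₂ r * r^3)
        / (r^2 * (1 - 2 * m₀ r / r)))) r)
    (hTOV₃ : ∀ r ∈ Set.Ioc (0:ℝ) R,
      HasDerivAt p₃ (-((ρ₀ r + p₃ r) * (m₀ r + 4 * Real.pi * p₃ r * r^3)
        / (r^2 * (1 - 2 * m₀ r / r)))) r)
    (hp : ∀ r, p r =
      (lam * p₁ r * (p₃ r - p₂ r) + (1 - lam) * p₂ r * (p₃ r - p₁ r))
        / (lam * (p₃ r - p₂ r) + (1 - lam) * (p₃ r - p₁ r)))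
    (hden : ∀ r ∈ Set.Ioc (0:ℝ) R,
      (lam * (p₃ r - p₂ r) + (1 - lam) * (p₃ r - p₁ r)) ≠ 0) :
    ∀ r ∈ Set.Ioc (0:ℝ) R,
      HasDerivAt p (-((ρ₀ r + p r) * (m₀ r + 4 * Real.pi * p r * r^3)
        / (r^2 * (1 - 2 * m₀ r / r)))) r := by
  intro r hr
  have hp_eq : p = riccatiCombination lam p₁ p₂ p₃ := funext hp
  simp only [tov_rhs_eq_quadratic] at hTOV₁ hTOV₂ hTOV₃ ⊢
  rw [hp_eq]
  exact (hTOV₁ r hr).riccatiCombination lam (hTOV₂ r hr) (hTOV₃ r hr) (hden r hr)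

/-- Theorem P1c: three solutions of the TOV pressure equation
(fixed ρ₀, m₀) generate the general solution with no integrations. -/
theorem TOV_theorem_P1c
    (R : ℝ) (hR : 0 < R) (ρ₀ m₀ p₁ p₂ p₃ p : ℝ → ℝ) (lam : ℝ)
    (hmetric : ∀ r ∈ Set.Ioc (0:ℝ) R, 0 < 1 - 2 * m₀ r / r)
    (hm : ∀ r ∈ Set.Ioc (0:ℝ) R, HasDerivAt m₀ (4 * Real.pi * ρ₀ r * r^2) r)
    (hTOV₁ : ∀ r ∈ Set.Ioc (0:ℝ) R,
      HasDerivAt p₁ (-((ρ₀ r + p₁ r) * (m₀ r + 4 * Real.pi * p₁ r * r^3)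
        / (r^2 * (1 - 2 * m₀ r / r)))) r)
    (hTOV₂ : ∀ r ∈ Set.Ioc (0:ℝ) R,
      HasDerivAt p₂ (-((ρ₀ r + p₂ r) * (m₀ r + 4 * Real.pi * p₂ r * r^3)
        / (r^2 * (1 - 2 * m₀ r / r)))) r)
    (hTOV₃ : ∀ r ∈ Set.Ioc (0:ℝ) R,
      HasDerivAt p₃ (-((ρ₀ r + p₃ r) * (m₀ r + 4 * Real.pi * p₃ r * r^3)
        / (r^2 * (1 - 2 * m₀ r / r)))) r)
    (hp : ∀ r, p r =
      (lam * p₁ r * (p₃ r - p₂ r) + (1 - lam) * p₂ r * (p₃ r - p₁ r))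
        / (lam * (p₃ r - p₂ r) + (1 - lam) * (p₃ r - p₁ r)))
    (hden : ∀ r ∈ Set.Ioc (0:ℝ) R,
      (lam * (p₃ r - p₂ r) + (1 - lam) * (p₃ r - p₁ r)) ≠ 0) :
    ∀ r ∈ Set.Ioc (0:ℝ) R,
      HasDerivAt p (-((ρ₀ r + p r) * (m₀ r + 4 * Real.pi * p r * r^3)
        / (r^2 * (1 - 2 * m₀ r / r)))) r :=
  TOV_theorem_P1c_general R ρ₀ m₀ p₁ p₂ p₃ p lam hTOV₁ hTOV₂ hTOV₃ hp hden
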